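/- arXiv:2603.04634 — 6 statements merged into one kernel-verified Lean document; each statement's English description precedes it below -/
import Mathlib

section
/- For every a ∈ A and all m, n ∈ ℤ, the Fourier projections are mutually orthogonal idempotents: P_m(P_n(a)) = P_n(a) if m = n, and P_m(P_n(a)) = 0 if m ≠ n. -/
open MeasureTheory intervalIntegral

/-- The `m`-th Fourier projection of `a` with respect to the one-parameter group `α`:
`P_m(a) := (1/(2π)) ∫_0^{2π} e^{-imt} • α(t)(a) dt` (a Bochner integral). -/
noncomputable def fourierProj {A : Type*} [NormedAddCommGroup A] [NormedSpace ℂ A]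
    (α : ℝ → (A →L[ℂ] A)) (m : ℤ) (a : A) : A :=
  (2 * (Real.pi : ℂ))⁻¹ •
    ∫ t in (0 : ℝ)..(2 * Real.pi), Complex.exp (-(m : ℂ) * (t : ℂ) * Complex.I) • (α t) a

/-
The orbit of `P_n a` is `t ↦ e^{int} • P_n a`: translating the integration variable by `t` in the
integral defining `P_n a` costs the factor `e^{int}`, and by `2π`-periodicity the translated
integral over a period is unchanged. Hence `P_m (P_n a) = (1/2π) ∫_0^{2π} e^{i(n-m)t} dt • P_n a`,
and the scalar integral is `1` or `0` according as `m = n` or not.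
-/

open Complex
open scoped Real

lemma exp_int_mul_ofReal_mul_I_periodic (k : ℤ) :
    Function.Periodic (fun t : ℝ => exp (k * t * I)) (2 * π) := by
  intro t
  have hk : (k : ℂ) * ↑(t + 2 * π) * I = k * t * I + k * (2 * π * I) := by push_cast; ring
  simp only [hk, exp_add, exp_int_mul_two_pi_mul_I, mul_one]

lemma integral_exp_int_mul_ofReal_mul_I (k : ℤ) :
    ∫ t in (0 : ℝ)..2 * π, exp (k * t * I) = if k = 0 then 2 * (π : ℂ) else 0 := by
  split_ifs with hk
  · simp [hk]
  · have hc : (k : ℂ) * I ≠ 0 := mul_ne_zero (Int.cast_ne_zero.mpr hk) I_ne_zero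
    have h := integral_exp_mul_complex (a := 0) (b := 2 * π) hc
    have h2π : (k : ℂ) * I * ↑(2 * π) = k * (2 * π * I) := by push_cast; ring
    simp only [mul_right_comm _ _ I] at h ⊢
    rw [h, h2π, exp_int_mul_two_pi_mul_I, ofReal_zero, mul_zero, exp_zero, sub_self, zero_div]

lemma intervalIntegral_comp_add_left_of_periodic {E : Type*} [NormedAddCommGroup E]
    [NormedSpace ℝ E] {f : ℝ → E} {T : ℝ} (hf : Function.Periodic f T) (t : ℝ) :
    ∫ s in (0 : ℝ)..T, f (t + s) = ∫ s in (0 : ℝ)..T, f s := by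
  simpa [add_comm T] using hf.intervalIntegral_add_eq t 0

section OneParameterGroup

variable {A : Type*} [NormedAddCommGroup A] [NormedSpace ℂ A] [CompleteSpace A]
  {α : ℝ → (A →L[ℂ] A)}

lemma apply_fourierProj (hadd : ∀ s t : ℝ, α (s + t) = (α s).comp (α t))
    (hper : ∀ t : ℝ, α (t + 2 * π) = α t) (hcont : ∀ a : A, Continuous fun t : ℝ => (α t) a)
    (a : A) (n : ℤ) (t : ℝ) :
    α t (fourierProj α n a) = exp (n * t * I) • fourierProj α n a := by
  set g : ℝ → A := fun s => exp (-n * s * I) • α s a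
  have hg_periodic : Function.Periodic g (2 * π) := fun s => by
    simp only [g, hper, ← Int.cast_neg, exp_int_mul_ofReal_mul_I_periodic (-n) s]
  have hg_int : IntervalIntegrable g volume 0 (2 * π) :=
    ((by fun_prop : Continuous fun s : ℝ => exp (-n * s * I)).smul (hcont a)).intervalIntegrable _ _
  have hshift : ∀ s : ℝ, α t (g s) = exp (n * t * I) • g (t + s) := fun s => by
    simp only [g, map_smul, hadd, ContinuousLinearMap.comp_apply, smul_smul, ← exp_add]
    congr 2
    push_cast
    ring
  calc α t (fourierProj α n a)
      = (2 * (π : ℂ))⁻¹ • ∫ s in (0 : ℝ)..2 * π, α t (g s) := by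
        rw [fourierProj, map_smul, (α t).intervalIntegral_comp_comm hg_int]
    _ = exp (n * t * I) • fourierProj α n a := by
        simp only [hshift, intervalIntegral.integral_smul,
          intervalIntegral_comp_add_left_of_periodic hg_periodic]
        exact smul_comm _ _ _

end OneParameterGroup

theorem fourierProj_orthogonal_idempotent_general
    {A : Type*} [NormedAddCommGroup A] [NormedSpace ℂ A] [CompleteSpace A]
    (α : ℝ → (A →L[ℂ] A))
    (hadd : ∀ s t : ℝ, α (s + t) = (α s).comp (α t))
    (hper : ∀ t : ℝ, α (t + 2 * Real.pi) = α t)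
    (hcont : ∀ a : A, Continuous fun t : ℝ => (α t) a) :
    ∀ (a : A) (m n : ℤ),
      fourierProj α m (fourierProj α n a) = if m = n then fourierProj α n a else 0 := by
  intro a m n
  have hexp : ∀ t : ℝ, exp (-m * t * I) * exp (n * t * I) = exp ((n - m : ℤ) * t * I) := by
    intro t
    rw [← exp_add]
    congr 1
    push_cast
    ring
  rw [fourierProj]
  simp only [apply_fourierProj hadd hper hcont, smul_smul, hexp,
    intervalIntegral.integral_smul_const, integral_exp_int_mul_ofReal_mul_I, sub_eq_zero, eq_comm]
  split_ifs
  · rw [inv_mul_cancel₀ (by simp [Real.pi_ne_zero]), one_smul]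
  · rw [mul_zero, zero_smul]

/-- For a strongly continuous `2π`-periodic one-parameter group `α` of operators on a
complex Banach space `A`, the Fourier projections are mutually orthogonal idempotents:
`P_m(P_n(a)) = P_n(a)` if `m = n` and `P_m(P_n(a)) = 0` otherwise. -/
theorem fourierProj_orthogonal_idempotent
    {A : Type*} [NormedAddCommGroup A] [NormedSpace ℂ A] [CompleteSpace A]
    (α : ℝ → (A →L[ℂ] A))
    (h0 : α 0 = ContinuousLinearMap.id ℂ A)
    (hadd : ∀ s t : ℝ, α (s + t) = (α s).comp (α t))
    (hper : ∀ t : ℝ, α (t + 2 * Real.pi) = α t)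
    (hcont : ∀ a : A, Continuous fun t : ℝ => (α t) a) :
    ∀ (a : A) (m n : ℤ),
      fourierProj α m (fourierProj α n a) = if m = n then fourierProj α n a else 0 :=
  fourierProj_orthogonal_idempotent_general α hadd hper hcont
end

section
/- Let r > 0 and let f : ℂ → A be holomorphic on the strip S_r and 2π-periodic on S_r. Then for every y ∈ ℝ with |y| < r and every m ∈ ℤ, the integration contour can be shifted: ∫_0^{2π} e^{-imt} • f(t) dt = e^{my} • ∫_0^{2π} e^{-imt} • f(t + iy) dt. -/
/-!
Apply Cauchy–Goursat to `z ↦ e^{-imz} • f z` on the rectangle with corners `0` and `2π + iy`,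
which lies in the strip. The weight `e^{-imz}` is `2π`-periodic, so the two vertical sides cancel
by periodicity of `f`, and on the top side `e^{-im(t + iy)} = e^{my} e^{-imt}`.
-/

open MeasureTheory intervalIntegral Complex
open scoped Interval

theorem intervalIntegral_eq_intervalIntegral_add_mul_I_of_differentiableOn
    {E : Type*} [NormedAddCommGroup E] [NormedSpace ℂ E] (g : ℂ → E) (a b y : ℝ)
    (hg : DifferentiableOn ℂ g ([[a, b]] ×ℂ [[0, y]]))
    (hsides : ∀ s ∈ [[0, y]], g (b + s * I) = g (a + s * I)) :
    ∫ x in a..b, g x = ∫ x in a..b, g (x + y * I) := by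
  have hrect := integral_boundary_rect_eq_zero_of_differentiableOn g a (b + y * I)
    (by simpa using hg)
  have hvert : ∫ s in (0 : ℝ)..y, g (b + s * I) = ∫ s in (0 : ℝ)..y, g (a + s * I) :=
    integral_congr hsides
  simp only [ofReal_re, ofReal_im, add_re, add_im, mul_re, mul_im, I_re, I_im, ofReal_zero,
    zero_mul, mul_zero, mul_one, sub_zero, zero_add, add_zero] at hrect
  rwa [hvert, add_sub_cancel_right, sub_eq_zero] at hrect

theorem uIcc_zero_reProdIm_subset_abs_im_lt {a b y r : ℝ} (hy : |y| < r) :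
    [[a, b]] ×ℂ [[0, y]] ⊆ {z : ℂ | |z.im| < r} := by
  have h0 : (0 : ℝ) ∈ Set.Ioo (-r) r := by constructor <;> linarith [abs_nonneg y]
  intro z hz
  exact abs_lt.2 (Set.ordConnected_Ioo.uIcc_subset h0 (abs_lt.1 hy) hz.2)

theorem exp_neg_int_mul_I_add_two_pi (m : ℤ) (z : ℂ) :
    exp (-(m : ℂ) * (z + 2 * Real.pi) * I) = exp (-(m : ℂ) * z * I) := by
  rw [show -(m : ℂ) * (z + 2 * Real.pi) * I = -(m : ℂ) * z * I + (-m : ℤ) * (2 * Real.pi * I) by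
    push_cast; ring, exp_add, exp_int_mul_two_pi_mul_I, mul_one]

theorem exp_neg_int_mul_I_add_mul_I (m : ℤ) (x y : ℝ) :
    exp (-(m : ℂ) * (x + y * I) * I) = exp ((m : ℂ) * y) * exp (-(m : ℂ) * x * I) := by
  rw [← exp_add]
  congr 1
  linear_combination (-(m : ℂ) * y) * I_mul_I

theorem integral_exp_smul_shift_contour_general
    {A : Type*} [NormedAddCommGroup A] [NormedSpace ℂ A]
    (r : ℝ) (f : ℂ → A)
    (hf : DifferentiableOn ℂ f {z : ℂ | |z.im| < r})
    (hper : ∀ z : ℂ, |z.im| < r → f (z + 2 * Real.pi) = f z)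
    (y : ℝ) (hy : |y| < r) (m : ℤ) :
    ∫ t in (0 : ℝ)..(2 * Real.pi),
        Complex.exp (-(m : ℂ) * (t : ℂ) * Complex.I) • f (t : ℂ)
      = Complex.exp ((m : ℂ) * (y : ℂ)) •
          ∫ t in (0 : ℝ)..(2 * Real.pi),
            Complex.exp (-(m : ℂ) * (t : ℂ) * Complex.I) • f ((t : ℂ) + (y : ℂ) * Complex.I) := by
  have hrect := uIcc_zero_reProdIm_subset_abs_im_lt (a := 0) (b := 2 * Real.pi) hy
  have hshift := intervalIntegral_eq_intervalIntegral_add_mul_I_of_differentiableOn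
    (fun z => exp (-(m : ℂ) * z * I) • f z) 0 (2 * Real.pi) y
    (((differentiable_exp.comp (by fun_prop)).differentiableOn).smul (hf.mono hrect))
    (fun s hs => by
      have hs' : |((s : ℂ) * I).im| < r := hrect ⟨by simp, by simpa using hs⟩
      simp only [ofReal_zero, zero_add, ofReal_mul, ofReal_ofNat]
      rw [add_comm, exp_neg_int_mul_I_add_two_pi, hper _ hs'])
  rw [hshift, ← intervalIntegral.integral_smul]
  simp only [exp_neg_int_mul_I_add_mul_I, mul_smul]

/-- **Contour shifting for Fourier coefficients of periodic holomorphic functions.**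
Let `A` be a complex Banach space, `r > 0`, and let `f : ℂ → A` be holomorphic on the
strip `S_r = {z : |Im z| < r}` and `2π`-periodic on `S_r`.  Then for every real `y` with
`|y| < r` and every `m ∈ ℤ`,
`∫_0^{2π} e^{-imt} • f(t) dt = e^{my} • ∫_0^{2π} e^{-imt} • f(t + iy) dt`. -/
theorem integral_exp_smul_shift_contour
    {A : Type*} [NormedAddCommGroup A] [NormedSpace ℂ A] [CompleteSpace A]
    (r : ℝ) (hr : 0 < r) (f : ℂ → A)
    (hf : DifferentiableOn ℂ f {z : ℂ | |z.im| < r})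
    (hper : ∀ z : ℂ, |z.im| < r → f (z + 2 * Real.pi) = f z)
    (y : ℝ) (hy : |y| < r) (m : ℤ) :
    ∫ t in (0 : ℝ)..(2 * Real.pi),
        Complex.exp (-(m : ℂ) * (t : ℂ) * Complex.I) • f (t : ℂ)
      = Complex.exp ((m : ℂ) * (y : ℂ)) •
          ∫ t in (0 : ℝ)..(2 * Real.pi),
            Complex.exp (-(m : ℂ) * (t : ℂ) * Complex.I) • f ((t : ℂ) + (y : ℂ) * Complex.I) :=
  integral_exp_smul_shift_contour_general r f hf hper y hy m
end

section
/- Suppose a ∈ A is a smooth vector for α, i.e., the orbit map t ↦ α(t)(a) is of class C^∞. Then the family of Fourier projections (P_m(a))_{m ∈ ℤ} is unconditionally summable in A with sum a: Σ_{m ∈ ℤ} P_m(a) = a. -/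
open MeasureTheory intervalIntegral

/-!
A smooth vector `a` gives a smooth `2π`-periodic orbit `f t = α t a`, and `P_m(a)` is the `m`-th
Fourier coefficient of `f` viewed on the circle. Integrating by parts twice turns it into
`-(1/m²)` times the coefficient of `f''`, so `‖P_m(a)‖ = O(1/m²)` and the Fourier series converges
absolutely. Its sum is identified with `f 0 = a` by testing against continuous linear functionals,
which reduces the claim to the scalar theorem that a continuous function on the circle with
summable Fourier coefficients is the pointwise sum of its Fourier series.
-/

open Function Complex Real

theorem Function.Periodic.deriv {𝕜 F : Type*} [NontriviallyNormedField 𝕜] [NormedAddCommGroup F]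
    [NormedSpace 𝕜 F] {f : 𝕜 → F} {c : 𝕜} (hf : Periodic f c) : Periodic (deriv f) c := fun x => by
  rw [← deriv_comp_add_const, hf.funext]

theorem Function.Periodic.continuous_lift {X : Type*} [TopologicalSpace X] {f : ℝ → X} {T : ℝ}
    (hf : Periodic f T) (hc : Continuous f) : Continuous hf.lift :=
  hc.quotient_liftOn' _

section FourierCoeff

variable {E : Type*} [NormedAddCommGroup E] [NormedSpace ℂ E] {T : ℝ} [hT : Fact (0 < T)]

theorem norm_fourierCoeff_le_norm (F : C(AddCircle T, E)) (n : ℤ) :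
    ‖fourierCoeff F n‖ ≤ ‖F‖ := by
  rw [fourierCoeff]
  simpa using norm_integral_le_of_norm_le_const (μ := AddCircle.haarAddCircle)
    (ae_of_all _ fun x => by simpa [norm_smul, Circle.norm_coe] using F.norm_coe_le_norm x)

variable [CompleteSpace E]

theorem fourierCoeff_continuousLinearMap_comp {G : Type*} [NormedAddCommGroup G]
    [NormedSpace ℂ G] [CompleteSpace G] (L : E →L[ℂ] G) (F : C(AddCircle T, E)) (n : ℤ) :
    fourierCoeff (L ∘ F) n = L (fourierCoeff F n) := by
  simp only [fourierCoeff, comp_apply, ← L.map_smul]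
  exact L.integral_comp_comm <| (F.continuous.integrable_of_hasCompactSupport
    (HasCompactSupport.of_compactSpace _)).fourier_smul _

theorem fourierCoeff_lift_of_hasDerivAt {f f' : ℝ → E} (hf : Periodic f T) (hf' : Periodic f' T)
    (hd : ∀ x, HasDerivAt f (f' x) x) (hc : Continuous f') (n : ℤ) :
    fourierCoeff hf'.lift n = (2 * π * I * n / T) • fourierCoeff hf.lift n := by
  simp only [fourierCoeff_eq_intervalIntegral _ n 0, zero_add, Periodic.lift_coe]
  rw [integral_smul_deriv_eq_deriv_smul (fun x _ => hasDerivAt_fourier_neg T n x) (fun x _ => hd x)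
    (Continuous.intervalIntegrable (by fun_prop) _ _) (hc.intervalIntegrable _ _)]
  have hfT : f T = f 0 := by simpa using hf 0
  have hT0 : ((T : ℝ) : AddCircle T) = ((0 : ℝ) : AddCircle T) := by simp
  simp only [hfT, hT0, sub_self, zero_sub, mul_smul, neg_mul, neg_div, neg_smul,
    intervalIntegral.integral_neg, intervalIntegral.integral_smul, neg_neg]
  exact smul_comm (1 / T) (2 * π * I * n / T : ℂ) _

theorem summable_norm_fourierCoeff_lift {f : ℝ → E} (hf : Periodic f T) (h : ContDiff ℝ 2 f) :
    Summable fun n => ‖fourierCoeff hf.lift n‖ := by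
  obtain ⟨hd, -, h1⟩ := contDiff_succ_iff_deriv.mp (show ContDiff ℝ (1 + 1) f from h)
  obtain ⟨hd1, -, h2⟩ := contDiff_succ_iff_deriv.mp (show ContDiff ℝ (0 + 1) (deriv f) from h1)
  have hf1 := hf.deriv
  have hf2 := hf1.deriv
  let F2 : C(AddCircle T, E) := ⟨hf2.lift, hf2.continuous_lift h2.continuous⟩
  have hcoeff (n : ℤ) :
      fourierCoeff F2 n = (2 * π * I * n / T) ^ 2 • fourierCoeff hf.lift n := by
    rw [sq, mul_smul, ← fourierCoeff_lift_of_hasDerivAt hf hf1 (fun x => (hd x).hasDerivAt)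
      h1.continuous, ← fourierCoeff_lift_of_hasDerivAt hf1 hf2 (fun x => (hd1 x).hasDerivAt)
      h2.continuous]
    rfl
  have hnorm (n : ℤ) : ‖(2 * π * I * n / T : ℂ) ^ 2‖ = (2 * π / T) ^ 2 * (n : ℝ) ^ 2 := by
    simp [div_pow, mul_pow, abs_of_pos hT.out, abs_of_pos pi_pos]
    ring
  have hbound (n : ℤ) (hn : n ≠ 0) :
      ‖fourierCoeff hf.lift n‖ ≤ (T / (2 * π)) ^ 2 * ‖F2‖ * (1 / (n : ℝ) ^ 2) := by
    have hpos : 0 < (2 * π / T) ^ 2 * (n : ℝ) ^ 2 := by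
      have := hT.out
      have : (n : ℝ) ≠ 0 := Int.cast_ne_zero.mpr hn
      positivity
    calc ‖fourierCoeff hf.lift n‖ = ‖fourierCoeff F2 n‖ / ((2 * π / T) ^ 2 * (n : ℝ) ^ 2) := by
          rw [hcoeff, norm_smul, hnorm, mul_div_cancel_left₀ _ hpos.ne']
      _ ≤ ‖F2‖ / ((2 * π / T) ^ 2 * (n : ℝ) ^ 2) := by
          gcongr; exact norm_fourierCoeff_le_norm F2 n
      _ = (T / (2 * π)) ^ 2 * ‖F2‖ * (1 / (n : ℝ) ^ 2) := by
          field_simp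
  refine .of_norm_bounded_eventually
    ((Real.summable_one_div_int_pow.mpr one_lt_two).mul_left ((T / (2 * π)) ^ 2 * ‖F2‖)) ?_
  filter_upwards [Filter.eventually_cofinite_ne 0] with n hn using
    (norm_norm _).trans_le (hbound n hn)

theorem hasSum_fourier_smul_fourierCoeff (F : C(AddCircle T, E))
    (h : Summable fun n => ‖fourierCoeff F n‖) (x : AddCircle T) :
    HasSum (fun n => fourier n x • fourierCoeff F n) (F x) := by
  have hs : Summable fun n => fourier n x • fourierCoeff F n :=
    h.of_norm_bounded fun n => by simp [norm_smul, fourier_apply, Circle.norm_coe]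
  convert hs.hasSum
  refine (SeparatingDual.eq_iff_forall_dual_eq (R := ℂ)).mpr fun φ => ?_
  let G : C(AddCircle T, ℂ) := (φ : C(E, ℂ)).comp F
  have hG : fourierCoeff G = fun n => φ (fourierCoeff F n) :=
    funext (fourierCoeff_continuousLinearMap_comp φ F)
  have hGsum := has_pointwise_sum_fourier_series_of_summable (hG ▸ φ.summable h.of_norm) x
  rw [hG] at hGsum
  exact hGsum.unique (by simpa [mul_comm] using φ.hasSum hs.hasSum)

end FourierCoeff

local instance : Fact (0 < 2 * π) := ⟨two_pi_pos⟩

theorem fourierProj_eq_fourierCoeff {A : Type*} [NormedAddCommGroup A] [NormedSpace ℂ A]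
    (α : ℝ → (A →L[ℂ] A)) (a : A) (hf : Periodic (fun t => α t a) (2 * π)) (m : ℤ) :
    fourierProj α m a = fourierCoeff hf.lift m := by
  have hexp (t : ℝ) : 2 * π * I * ((-m : ℤ) : ℂ) * t / (2 * π : ℝ) = -m * t * I := by
    push_cast
    field_simp
  simp only [fourierProj, fourierCoeff_eq_intervalIntegral _ m 0, zero_add, Periodic.lift_coe,
    fourier_coe_apply, hexp, one_div, ← Complex.coe_smul]
  push_cast
  rfl

theorem hasSum_fourierProj_of_smooth_vector_general
    {A : Type*} [NormedAddCommGroup A] [NormedSpace ℂ A] [CompleteSpace A]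
    (α : ℝ → (A →L[ℂ] A))
    (h0 : α 0 = ContinuousLinearMap.id ℂ A)
    (hper : ∀ t : ℝ, α (t + 2 * Real.pi) = α t)
    (a : A) (ha : ContDiff ℝ (⊤ : ℕ∞) fun t : ℝ => (α t) a) :
    HasSum (fun m : ℤ => fourierProj α m a) a := by
  have hf : Periodic (fun t => α t a) (2 * π) := fun t => by simp only [hper]
  have hsum := hasSum_fourier_smul_fourierCoeff ⟨hf.lift, hf.continuous_lift ha.continuous⟩
    (summable_norm_fourierCoeff_lift hf (ha.of_le (WithTop.coe_le_coe.mpr le_top))) 0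
  have hF0 : hf.lift 0 = a := by simpa [h0] using hf.lift_coe 0
  simpa [fourier_eval_zero, ← fourierProj_eq_fourierCoeff, hF0] using hsum

/-- **Fourier decomposition of smooth vectors.**  Let `α` be a strongly continuous
`2π`-periodic one-parameter group of operators on a complex Banach space `A` and let
`a ∈ A` be a smooth vector for `α`, i.e. `t ↦ α(t)(a)` is `C^∞`.  Then the family of
Fourier projections `(P_m(a))_{m ∈ ℤ}` is unconditionally summable with sum `a`:
`Σ_{m ∈ ℤ} P_m(a) = a`. -/
theorem hasSum_fourierProj_of_smooth_vector
    {A : Type*} [NormedAddCommGroup A] [NormedSpace ℂ A] [CompleteSpace A]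
    (α : ℝ → (A →L[ℂ] A))
    (h0 : α 0 = ContinuousLinearMap.id ℂ A)
    (hadd : ∀ s t : ℝ, α (s + t) = (α s).comp (α t))
    (hper : ∀ t : ℝ, α (t + 2 * Real.pi) = α t)
    (hcont : ∀ b : A, Continuous fun t : ℝ => (α t) b)
    (a : A) (ha : ContDiff ℝ (⊤ : ℕ∞) fun t : ℝ => (α t) a) :
    HasSum (fun m : ℤ => fourierProj α m a) a :=
  hasSum_fourierProj_of_smooth_vector_general α h0 hper a ha
end

section
/- Let A be a ring with an internal ℤ-grading 𝒜 : ℤ → AddSubgroup A (so A is the internal direct sum of the 𝒜_m and 𝒜_m · 𝒜_n ⊆ 𝒜_{m+n}), and suppose the degree-zero component is commutative: a·b = b·a for all a, b ∈ 𝒜₀. For x ∈ A write x₀ for the degree-zero homogeneous component of x. Suppose x₁, x₂ ∈ A have all their homogeneous components of negative degree equal to zero, y₁, y₂ ∈ A have all their homogeneous components of positive degree equal to zero, and (x₁)₀ + (y₁)₀ = 0 and (x₂)₀ + (y₂)₀ = 0. Then the commutator x₁x₂ − x₂x₁ has all components of negative degree equal to zero, the commutator y₁y₂ − y₂y₁ has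 all components of positive degree equal to zero, and (x₁x₂ − x₂x₁)₀ + (y₁y₂ − y₂y₁)₀ = 0. Consequently the set p₂ := {(x,y) : x has no negative components, y has no positive components, x₀ + y₀ = 0} is closed under the componentwise commutator bracket on A × A. -/
/-- The degree-`m` homogeneous component of an element of an internally `ℤ`-graded
ring. -/
noncomputable def homComponent {A : Type*} [Ring A] (𝒜 : ℤ → AddSubgroup A)
    [GradedRing 𝒜] (x : A) (m : ℤ) : A :=
  (DirectSum.decompose 𝒜 x m : A)

/-- Membership in the subalgebra `p₂`: the first component has no homogeneous
components of negative degree, the second has none of positive degree, and their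
degree-zero components are opposite. -/
def memP2 {A : Type*} [Ring A] (𝒜 : ℤ → AddSubgroup A) [GradedRing 𝒜]
    (p : A × A) : Prop :=
  (∀ m : ℤ, m < 0 → homComponent 𝒜 p.1 m = 0) ∧
    (∀ m : ℤ, 0 < m → homComponent 𝒜 p.2 m = 0) ∧
    homComponent 𝒜 p.1 0 + homComponent 𝒜 p.2 0 = 0

/-!
A product of two elements with no components of negative degree again has none, and
its degree-zero component is the product of the degree-zero components, because
`i + j = 0` with `i, j ≥ 0` forces `i = j = 0`; symmetrically for positive degrees.
Since `𝒜₀` is commutative, the degree-zero components of both commutators therefore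
vanish.
-/

open DirectSum

section Decompose

variable {ι A : Type*} [DecidableEq ι] [AddMonoid ι] [Ring A] (𝒜 : ι → AddSubgroup A)
  [GradedRing 𝒜]

theorem coe_decompose_mul_eq_zero_of_forall {x y : A} {n : ι}
    (h : ∀ i j, i + j = n → (decompose 𝒜 x i : A) = 0 ∨ (decompose 𝒜 y j : A) = 0) :
    (decompose 𝒜 (x * y) n : A) = 0 := by
  classical
  rw [decompose_mul, coe_mul_apply]
  refine Finset.sum_eq_zero fun ij hij => ?_
  rcases h ij.1 ij.2 (Finset.mem_filter.1 hij).2 with h | h <;> simp [h]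

theorem coe_decompose_mul_add_eq_of_forall {x y : A} {a b : ι}
    (h : ∀ i j, i + j = a + b → (i, j) ≠ (a, b) →
      (decompose 𝒜 x i : A) = 0 ∨ (decompose 𝒜 y j : A) = 0) :
    (decompose 𝒜 (x * y) (a + b) : A) = decompose 𝒜 x a * decompose 𝒜 y b := by
  classical
  rw [decompose_mul, coe_mul_apply]
  refine Finset.sum_eq_single (a, b) (fun ij hij hne => ?_) fun hab => ?_
  · rcases h ij.1 ij.2 (Finset.mem_filter.1 hij).2 hne with h | h <;> simp [h]
  · simp only [Finset.mem_filter, Finset.mem_product, DFinsupp.mem_support_iff, not_and_or,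
      not_not] at hab
    rcases hab with (h | h) | h <;> simp_all

end Decompose

section Homogeneous

variable {A : Type*} [Ring A] {𝒜 : ℤ → AddSubgroup A} [GradedRing 𝒜] {x y : A}

theorem homComponent_sub (x y : A) (m : ℤ) :
    homComponent 𝒜 (x - y) m = homComponent 𝒜 x m - homComponent 𝒜 y m := by
  simp [homComponent, decompose_sub]

theorem homComponent_mem (x : A) (m : ℤ) : homComponent 𝒜 x m ∈ 𝒜 m :=
  SetLike.coe_mem _

theorem homComponent_mul_eq_zero_of_nonneg (hx : ∀ m < 0, homComponent 𝒜 x m = 0)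
    (hy : ∀ m < 0, homComponent 𝒜 y m = 0) {m : ℤ} (hm : m < 0) :
    homComponent 𝒜 (x * y) m = 0 :=
  coe_decompose_mul_eq_zero_of_forall 𝒜 fun i j hij =>
    if hi : i < 0 then .inl (hx i hi) else .inr (hy j (by omega))

theorem homComponent_mul_eq_zero_of_nonpos (hx : ∀ m, 0 < m → homComponent 𝒜 x m = 0)
    (hy : ∀ m, 0 < m → homComponent 𝒜 y m = 0) {m : ℤ} (hm : 0 < m) :
    homComponent 𝒜 (x * y) m = 0 :=
  coe_decompose_mul_eq_zero_of_forall 𝒜 fun i j hij =>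
    if hi : 0 < i then .inl (hx i hi) else .inr (hy j (by omega))

theorem homComponent_mul_zero_of_nonneg (hx : ∀ m < 0, homComponent 𝒜 x m = 0)
    (hy : ∀ m < 0, homComponent 𝒜 y m = 0) :
    homComponent 𝒜 (x * y) 0 = homComponent 𝒜 x 0 * homComponent 𝒜 y 0 := by
  have := coe_decompose_mul_add_eq_of_forall 𝒜 (x := x) (y := y) (a := 0) (b := 0)
    fun i j hij hne => if hi : i < 0 then .inl (hx i hi) else .inr (hy j (by grind))
  rwa [add_zero] at this

theorem homComponent_mul_zero_of_nonpos (hx : ∀ m, 0 < m → homComponent 𝒜 x m = 0)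
    (hy : ∀ m, 0 < m → homComponent 𝒜 y m = 0) :
    homComponent 𝒜 (x * y) 0 = homComponent 𝒜 x 0 * homComponent 𝒜 y 0 := by
  have := coe_decompose_mul_add_eq_of_forall 𝒜 (x := x) (y := y) (a := 0) (b := 0)
    fun i j hij hne => if hi : 0 < i then .inl (hx i hi) else .inr (hy j (by grind))
  rwa [add_zero] at this

theorem homComponent_commutator_zero_of_nonneg
    (hcomm : ∀ a b : A, a ∈ 𝒜 0 → b ∈ 𝒜 0 → a * b = b * a)
    (hx : ∀ m < 0, homComponent 𝒜 x m = 0)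
    (hy : ∀ m < 0, homComponent 𝒜 y m = 0) : homComponent 𝒜 (x * y - y * x) 0 = 0 := by
  rw [homComponent_sub, homComponent_mul_zero_of_nonneg hx hy,
    homComponent_mul_zero_of_nonneg hy hx,
    hcomm _ _ (homComponent_mem x 0) (homComponent_mem y 0), sub_self]

theorem homComponent_commutator_zero_of_nonpos
    (hcomm : ∀ a b : A, a ∈ 𝒜 0 → b ∈ 𝒜 0 → a * b = b * a)
    (hx : ∀ m, 0 < m → homComponent 𝒜 x m = 0)
    (hy : ∀ m, 0 < m → homComponent 𝒜 y m = 0) : homComponent 𝒜 (x * y - y * x) 0 = 0 := by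
  rw [homComponent_sub, homComponent_mul_zero_of_nonpos hx hy,
    homComponent_mul_zero_of_nonpos hy hx,
    hcomm _ _ (homComponent_mem x 0) (homComponent_mem y 0), sub_self]

theorem memP2_commutator (hcomm : ∀ a b : A, a ∈ 𝒜 0 → b ∈ 𝒜 0 → a * b = b * a)
    {x₁ x₂ y₁ y₂ : A}
    (hx₁ : ∀ m < 0, homComponent 𝒜 x₁ m = 0) (hx₂ : ∀ m < 0, homComponent 𝒜 x₂ m = 0)
    (hy₁ : ∀ m, 0 < m → homComponent 𝒜 y₁ m = 0)
    (hy₂ : ∀ m, 0 < m → homComponent 𝒜 y₂ m = 0) :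
    memP2 𝒜 (x₁ * x₂ - x₂ * x₁, y₁ * y₂ - y₂ * y₁) := by
  refine ⟨fun m hm => ?_, fun m hm => ?_, ?_⟩
  · rw [homComponent_sub, homComponent_mul_eq_zero_of_nonneg hx₁ hx₂ hm,
      homComponent_mul_eq_zero_of_nonneg hx₂ hx₁ hm, sub_zero]
  · rw [homComponent_sub, homComponent_mul_eq_zero_of_nonpos hy₁ hy₂ hm,
      homComponent_mul_eq_zero_of_nonpos hy₂ hy₁ hm, sub_zero]
  · rw [homComponent_commutator_zero_of_nonneg hcomm hx₁ hx₂,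
      homComponent_commutator_zero_of_nonpos hcomm hy₁ hy₂, add_zero]

end Homogeneous

theorem commutator_closed_in_p2_general
    {A : Type*} [Ring A] (𝒜 : ℤ → AddSubgroup A) [GradedRing 𝒜]
    (hcomm : ∀ a b : A, a ∈ 𝒜 0 → b ∈ 𝒜 0 → a * b = b * a)
    (x₁ x₂ y₁ y₂ : A)
    (hx₁ : ∀ m : ℤ, m < 0 → homComponent 𝒜 x₁ m = 0)
    (hx₂ : ∀ m : ℤ, m < 0 → homComponent 𝒜 x₂ m = 0)
    (hy₁ : ∀ m : ℤ, 0 < m → homComponent 𝒜 y₁ m = 0)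
    (hy₂ : ∀ m : ℤ, 0 < m → homComponent 𝒜 y₂ m = 0) :
    ((∀ m : ℤ, m < 0 → homComponent 𝒜 (x₁ * x₂ - x₂ * x₁) m = 0) ∧
      (∀ m : ℤ, 0 < m → homComponent 𝒜 (y₁ * y₂ - y₂ * y₁) m = 0) ∧
      homComponent 𝒜 (x₁ * x₂ - x₂ * x₁) 0 + homComponent 𝒜 (y₁ * y₂ - y₂ * y₁) 0 = 0) ∧
    ∀ p q : A × A, memP2 𝒜 p → memP2 𝒜 q →
      memP2 𝒜 (p.1 * q.1 - q.1 * p.1, p.2 * q.2 - q.2 * p.2) :=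
  ⟨memP2_commutator hcomm hx₁ hx₂ hy₁ hy₂, fun _ _ hp hq =>
    memP2_commutator hcomm hp.1 hq.1 hp.2.1 hq.2.1⟩

/-- Let `A` be a ring with an internal `ℤ`-grading `𝒜` whose degree-zero component is
commutative.  If `x₁, x₂` have no homogeneous components of negative degree, `y₁, y₂`
have none of positive degree, and `(x₁)₀ + (y₁)₀ = 0`, `(x₂)₀ + (y₂)₀ = 0`, then the
commutator `x₁x₂ − x₂x₁` has no components of negative degree, `y₁y₂ − y₂y₁` has none
of positive degree, and `(x₁x₂ − x₂x₁)₀ + (y₁y₂ − y₂y₁)₀ = 0`.  Consequently the set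
`p₂` is closed under the componentwise commutator bracket on `A × A`. -/
theorem commutator_closed_in_p2
    {A : Type*} [Ring A] (𝒜 : ℤ → AddSubgroup A) [GradedRing 𝒜]
    (hcomm : ∀ a b : A, a ∈ 𝒜 0 → b ∈ 𝒜 0 → a * b = b * a)
    (x₁ x₂ y₁ y₂ : A)
    (hx₁ : ∀ m : ℤ, m < 0 → homComponent 𝒜 x₁ m = 0)
    (hx₂ : ∀ m : ℤ, m < 0 → homComponent 𝒜 x₂ m = 0)
    (hy₁ : ∀ m : ℤ, 0 < m → homComponent 𝒜 y₁ m = 0)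
    (hy₂ : ∀ m : ℤ, 0 < m → homComponent 𝒜 y₂ m = 0)
    (h₁ : homComponent 𝒜 x₁ 0 + homComponent 𝒜 y₁ 0 = 0)
    (h₂ : homComponent 𝒜 x₂ 0 + homComponent 𝒜 y₂ 0 = 0) :
    ((∀ m : ℤ, m < 0 → homComponent 𝒜 (x₁ * x₂ - x₂ * x₁) m = 0) ∧
      (∀ m : ℤ, 0 < m → homComponent 𝒜 (y₁ * y₂ - y₂ * y₁) m = 0) ∧
      homComponent 𝒜 (x₁ * x₂ - x₂ * x₁) 0 + homComponent 𝒜 (y₁ * y₂ - y₂ * y₁) 0 = 0) ∧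
    ∀ p q : A × A, memP2 𝒜 p → memP2 𝒜 q →
      memP2 𝒜 (p.1 * q.1 - q.1 * p.1, p.2 * q.2 - q.2 * p.2) :=
  commutator_closed_in_p2_general 𝒜 hcomm x₁ x₂ y₁ y₂ hx₁ hx₂ hy₁ hy₂
end

section
/- For all real numbers r, R with 0 < r < R < 1, the family indexed by n ∈ ℤ given by √( (∫_{1−r}^{1+r} s^{2n+1} ds) / (∫_{1−R}^{1+R} s^{2n+1} ds) ) is summable; here s^{2n+1} denotes the integer (zpow) power of s, which is well defined and positive since the integration variable s ranges over positive reals, so both integrals are positive. (These quotients are the squares of the singular values of the restriction operator between the Bergman spaces of the annuli {1−R < |z| < 1+R} and {1−r < |z| < 1+r}, and their square-summability shows that this restriction operator is trace class.) -/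
/-!
On `[1 - r, 1 + r]` the power `s ^ m` is at most `(1 + r) ^ m` for `m ≥ 0` and at most
`(1 - r) ^ m` for `m ≤ 0`, while on `[1 - R, 1 + R]` it is at least `c ^ m` on a subinterval of
length `(R - r) / 2`, where `c` is the midpoint of `[1 + r, 1 + R]` (resp. of `[1 - R, 1 - r]`).
Hence the ratio of the two integrals decays geometrically in `|m|`, and so do its square roots.
-/

open MeasureTheory intervalIntegral Set

section MonotoneBounds

variable {f : ℝ → ℝ} {a b c : ℝ}

theorem MonotoneOn.integral_le_sub_mul (hf : MonotoneOn f (Icc a b)) (hab : a ≤ b) :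
    ∫ x in a..b, f x ≤ (b - a) * f b :=
  calc ∫ x in a..b, f x ≤ ∫ _ in a..b, f b :=
        integral_mono_on hab (hf.mono (uIcc_of_le hab).subset).intervalIntegrable
          intervalIntegrable_const fun x hx => hf hx ⟨hab, le_rfl⟩ hx.2
    _ = (b - a) * f b := by simp

theorem AntitoneOn.integral_le_sub_mul (hf : AntitoneOn f (Icc a b)) (hab : a ≤ b) :
    ∫ x in a..b, f x ≤ (b - a) * f a :=
  calc ∫ x in a..b, f x ≤ ∫ _ in a..b, f a :=
        integral_mono_on hab (hf.mono (uIcc_of_le hab).subset).intervalIntegrable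
          intervalIntegrable_const fun x hx => hf ⟨le_rfl, hab⟩ hx hx.1
    _ = (b - a) * f a := by simp

theorem MonotoneOn.sub_mul_le_integral (hf : MonotoneOn f (Icc a b)) (hf₀ : 0 ≤ f a)
    (hac : a ≤ c) (hcb : c ≤ b) : (b - c) * f c ≤ ∫ x in a..b, f x := by
  have hab := hac.trans hcb
  calc (b - c) * f c = ∫ _ in c..b, f c := by simp
    _ ≤ ∫ x in c..b, f x :=
        integral_mono_on hcb intervalIntegrable_const
          (hf.mono ((uIcc_of_le hcb).subset.trans (Icc_subset_Icc_left hac))).intervalIntegrable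
          fun x hx => hf ⟨hac, hcb⟩ ⟨hac.trans hx.1, hx.2⟩ hx.1
    _ ≤ ∫ x in a..b, f x :=
        integral_mono_interval hac hcb le_rfl
          (ae_restrict_of_forall_mem measurableSet_Ioc fun x hx =>
            hf₀.trans (hf ⟨le_rfl, hab⟩ (Ioc_subset_Icc_self hx) hx.1.le))
          (hf.mono (uIcc_of_le hab).subset).intervalIntegrable

theorem AntitoneOn.sub_mul_le_integral (hf : AntitoneOn f (Icc a b)) (hf₀ : 0 ≤ f b)
    (hac : a ≤ c) (hcb : c ≤ b) : (c - a) * f c ≤ ∫ x in a..b, f x := by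
  have hab := hac.trans hcb
  calc (c - a) * f c = ∫ _ in a..c, f c := by simp
    _ ≤ ∫ x in a..c, f x :=
        integral_mono_on hac intervalIntegrable_const
          (hf.mono ((uIcc_of_le hac).subset.trans (Icc_subset_Icc_right hcb))).intervalIntegrable
          fun x hx => hf ⟨hx.1, hx.2.trans hcb⟩ ⟨hac, hcb⟩ hx.2
    _ ≤ ∫ x in a..b, f x :=
        integral_mono_interval le_rfl hac hcb
          (ae_restrict_of_forall_mem measurableSet_Ioc fun x hx =>
            hf₀.trans (hf (Ioc_subset_Icc_self hx) ⟨hab, le_rfl⟩ hx.2))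
          (hf.mono (uIcc_of_le hab).subset).intervalIntegrable

end MonotoneBounds

theorem zpow_monotoneOn_of_nonneg {m : ℤ} (hm : 0 ≤ m) :
    MonotoneOn (fun x : ℝ => x ^ m) (Ici 0) :=
  fun _ hx _ _ hxy => zpow_le_zpow_left₀ hm hx hxy

theorem zpow_antitoneOn_of_nonpos {m : ℤ} (hm : m ≤ 0) :
    AntitoneOn (fun x : ℝ => x ^ m) (Ioi 0) := by
  intro x hx y _ hxy
  simpa [inv_zpow'] using
    zpow_le_zpow_left₀ (neg_nonneg.2 hm) (inv_nonneg.2 (hx.trans_le hxy).le) (inv_anti₀ hx hxy)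

theorem summable_sqrt_of_le_mul_pow {f : ℕ → ℝ} {K q : ℝ} (hq₀ : 0 ≤ q) (hq₁ : q < 1)
    (hf : ∀ n, f n ≤ K * q ^ (2 * n + 1)) : Summable fun n => √(f n) := by
  refine .of_nonneg_of_le (fun _ => Real.sqrt_nonneg _) (fun n => ?_)
    ((summable_geometric_of_lt_one hq₀ hq₁).mul_left √K)
  calc √(f n) ≤ √(K * q ^ (2 * n + 1)) := Real.sqrt_le_sqrt (hf n)
    _ = √K * √(q ^ (2 * n + 1)) := Real.sqrt_mul' K (by positivity)
    _ ≤ √K * q ^ n := by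
        gcongr
        rw [Real.sqrt_le_left (pow_nonneg hq₀ n), pow_succ, pow_mul']
        exact mul_le_of_le_one_right (by positivity) hq₁.le

noncomputable def annulusRatio (r R : ℝ) (m : ℤ) : ℝ :=
  (∫ s in (1 - r)..(1 + r), s ^ m) / ∫ s in (1 - R)..(1 + R), s ^ m

section annulusRatio

variable {r R : ℝ}

theorem annulusRatio_natCast_le (hr : 0 ≤ r) (hrR : r < R) (hR : R ≤ 1) (k : ℕ) :
    annulusRatio r R k ≤ 4 * r / (R - r) * ((1 + r) / (1 + (r + R) / 2)) ^ k := by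
  have hmono : MonotoneOn (fun x : ℝ => x ^ (k : ℤ)) (Icc (1 - R) (1 + R)) :=
    (zpow_monotoneOn_of_nonneg k.cast_nonneg).mono fun x hx => by
      simp only [mem_Ici]; linarith [hx.1]
  have hnum : ∫ s in (1 - r)..(1 + r), s ^ (k : ℤ) ≤ (1 + r - (1 - r)) * (1 + r) ^ (k : ℤ) :=
    (hmono.mono (Icc_subset_Icc (by linarith) (by linarith))).integral_le_sub_mul (by linarith)
  have hden : (1 + R - (1 + (r + R) / 2)) * (1 + (r + R) / 2) ^ (k : ℤ) ≤
      ∫ s in (1 - R)..(1 + R), s ^ (k : ℤ) :=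
    hmono.sub_mul_le_integral (zpow_nonneg (by linarith) _) (by linarith) (by linarith)
  calc annulusRatio r R k
      ≤ (1 + r - (1 - r)) * (1 + r) ^ (k : ℤ) /
          ((1 + R - (1 + (r + R) / 2)) * (1 + (r + R) / 2) ^ (k : ℤ)) :=
        div_le_div₀ (mul_nonneg (by linarith) (zpow_nonneg (by linarith) _)) hnum
          (mul_pos (by linarith) (zpow_pos (by linarith) _)) hden
    _ = 4 * r / (R - r) * ((1 + r) / (1 + (r + R) / 2)) ^ k := by
        rw [zpow_natCast, zpow_natCast, div_pow, mul_div_mul_comm]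
        congr 1
        field_simp
        ring

theorem annulusRatio_neg_natCast_le (hr : 0 ≤ r) (hrR : r < R) (hR : R < 1) (k : ℕ) :
    annulusRatio r R (-k) ≤ 4 * r / (R - r) * ((1 - (r + R) / 2) / (1 - r)) ^ k := by
  have hanti : AntitoneOn (fun x : ℝ => x ^ (-k : ℤ)) (Icc (1 - R) (1 + R)) :=
    (zpow_antitoneOn_of_nonpos (neg_nonpos.2 k.cast_nonneg)).mono fun x hx => by
      simp only [mem_Ioi]; linarith [hx.1]
  have hnum : ∫ s in (1 - r)..(1 + r), s ^ (-k : ℤ) ≤ (1 + r - (1 - r)) * (1 - r) ^ (-k : ℤ) :=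
    (hanti.mono (Icc_subset_Icc (by linarith) (by linarith))).integral_le_sub_mul (by linarith)
  have hden : (1 - (r + R) / 2 - (1 - R)) * (1 - (r + R) / 2) ^ (-k : ℤ) ≤
      ∫ s in (1 - R)..(1 + R), s ^ (-k : ℤ) :=
    hanti.sub_mul_le_integral (zpow_nonneg (by linarith) _) (by linarith) (by linarith)
  calc annulusRatio r R (-k)
      ≤ (1 + r - (1 - r)) * (1 - r) ^ (-k : ℤ) /
          ((1 - (r + R) / 2 - (1 - R)) * (1 - (r + R) / 2) ^ (-k : ℤ)) :=
        div_le_div₀ (mul_nonneg (by linarith) (zpow_nonneg (by linarith) _)) hnum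
          (mul_pos (by linarith) (zpow_pos (by linarith) _)) hden
    _ = 4 * r / (R - r) * ((1 - (r + R) / 2) / (1 - r)) ^ k := by
        rw [zpow_neg, zpow_neg, zpow_natCast, zpow_natCast, div_pow, mul_div_mul_comm,
          inv_div_inv]
        congr 1
        field_simp
        ring

end annulusRatio

/-- **Square-summability of the singular values of the restriction operator between
Bergman spaces of concentric annuli.**  For all real `r, R` with `0 < r < R < 1`, the
family indexed by `n ∈ ℤ` given by
`√( (∫_{1−r}^{1+r} s^{2n+1} ds) / (∫_{1−R}^{1+R} s^{2n+1} ds) )`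
is summable (the powers are integer `zpow` powers, well defined and positive on the
positive reals over which `s` ranges). -/
theorem summable_sqrt_annulus_ratio :
    ∀ r R : ℝ, 0 < r → r < R → R < 1 →
      Summable fun n : ℤ =>
        Real.sqrt ((∫ s in (1 - r)..(1 + r), s ^ (2 * n + 1)) /
          (∫ s in (1 - R)..(1 + R), s ^ (2 * n + 1))) := by
  intro r R hr hrR hR
  show Summable fun n : ℤ => √(annulusRatio r R (2 * n + 1))
  have hq₁ : (1 + r) / (1 + (r + R) / 2) < 1 := by rw [div_lt_one (by linarith)]; linarith
  have hq₂ : (1 - (r + R) / 2) / (1 - r) < 1 := by rw [div_lt_one (by linarith)]; linarith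
  refine .of_nat_of_neg_add_one ?_ ?_
  · refine summable_sqrt_of_le_mul_pow (K := 4 * r / (R - r))
      (div_nonneg (by linarith) (by linarith)) hq₁ fun n => ?_
    exact_mod_cast annulusRatio_natCast_le hr.le hrR hR.le (2 * n + 1)
  · refine summable_sqrt_of_le_mul_pow (K := 4 * r / (R - r))
      (div_nonneg (by linarith) (by linarith)) hq₂ fun n => ?_
    convert annulusRatio_neg_natCast_le hr.le hrR hR (2 * n + 1) using 2
    push_cast
    ring
end

section
/- Let E and F be real normed spaces, U ⊆ E open, k ∈ ℕ, and γ : U → F a map of class C^k. Let (T_j) be a sequence of continuous linear operators F → F that converges to the identity uniformly on every compact subset of F (i.e., for every compact C ⊆ F, sup_{w ∈ C} ‖T_j(w) − w‖ → 0 as j → ∞). Then T_j ∘ γ → γ in the compact-open C^k topology: for every i ≤ k, every compact K ⊆ U and every compact L ⊆ E, sup_{x ∈ K, v₁,…,v_i ∈ L} ‖(D^i(T_j ∘ γ))(x)(v₁,…,v_i) − (D^i γ)(x)(v₁,…,v_i)‖ → 0 as j → ∞. -/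
/-!
By linearity, `D^i (T_j ∘ γ) x v = T_j (D^i γ x v)`. The values `D^i γ x v` with `x ∈ K` and all
`v l ∈ L` form a compact set, the continuous image of `K × L^i`, and `T_j → id` uniformly on it.
-/

open Set

section IteratedFDerivWithin

variable {𝕜 E F : Type*} [NontriviallyNormedField 𝕜] [NormedAddCommGroup E] [NormedSpace 𝕜 E]
  [NormedAddCommGroup F] [NormedSpace 𝕜 F] {f : E → F} {s : Set E} {n : WithTop ℕ∞} {i : ℕ}

theorem ContDiffOn.continuousOn_iteratedFDerivWithin_apply (hf : ContDiffOn 𝕜 n f s)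
    (hs : UniqueDiffOn 𝕜 s) (hi : i ≤ n) :
    ContinuousOn (fun p : E × (Fin i → E) => iteratedFDerivWithin 𝕜 i f s p.1 p.2)
      (s ×ˢ univ) :=
  continuous_eval.comp_continuousOn <|
    ((hf.continuousOn_iteratedFDerivWithin hi hs).comp continuousOn_fst
      fun _ hp => hp.1).prodMk continuousOn_snd

theorem ContDiffOn.isCompact_image_iteratedFDerivWithin_apply (hf : ContDiffOn 𝕜 n f s)
    (hs : UniqueDiffOn 𝕜 s) (hi : i ≤ n) {K L : Set E} (hKs : K ⊆ s) (hK : IsCompact K)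
    (hL : IsCompact L) :
    IsCompact ((fun p : E × (Fin i → E) => iteratedFDerivWithin 𝕜 i f s p.1 p.2) ''
      (K ×ˢ univ.pi fun _ => L)) :=
  (hK.prod (isCompact_univ_pi fun _ => hL)).image_of_continuousOn <|
    (hf.continuousOn_iteratedFDerivWithin_apply hs hi).mono
      (prod_mono hKs (subset_univ _))

theorem ContinuousLinearMap.iteratedFDerivWithin_comp_left_apply {G : Type*}
    [NormedAddCommGroup G] [NormedSpace 𝕜 G] (g : F →L[𝕜] G) {x : E}
    (hf : ContDiffWithinAt 𝕜 n f s x) (hs : UniqueDiffOn 𝕜 s) (hx : x ∈ s) (hi : i ≤ n)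
    (v : Fin i → E) :
    iteratedFDerivWithin 𝕜 i (fun z => g (f z)) s x v = g (iteratedFDerivWithin 𝕜 i f s x v) :=
  congrArg (· v) (g.iteratedFDerivWithin_comp_left hf hs hx hi)

end IteratedFDerivWithin

/-- **Post-composition with operators converging to the identity uniformly on compacta
is convergent in the compact-open `C^k` topology.**  Let `E, F` be real normed spaces,
`U ⊆ E` open, `k ∈ ℕ` and `γ : U → F` of class `C^k`.  Let `(T_j)` be a sequence of
continuous linear operators `F → F` converging to the identity uniformly on every
compact subset of `F`.  Then for every `i ≤ k`, every compact `K ⊆ U` and every compact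
`L ⊆ E`, the `i`-th derivatives of `T_j ∘ γ` converge to those of `γ` uniformly for
base points in `K` and direction vectors in `L`. -/
theorem comp_tendsto_identity_in_compact_open_Ck
    {E F : Type*} [NormedAddCommGroup E] [NormedSpace ℝ E]
    [NormedAddCommGroup F] [NormedSpace ℝ F]
    (U : Set E) (hU : IsOpen U) (k : ℕ) (γ : E → F)
    (hγ : ContDiffOn ℝ (k : ℕ∞) γ U)
    (T : ℕ → (F →L[ℝ] F))
    (hT : ∀ C : Set F, IsCompact C → ∀ ε > (0 : ℝ), ∃ J : ℕ, ∀ j ≥ J, ∀ w ∈ C,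
      ‖T j w - w‖ < ε) :
    ∀ i : ℕ, i ≤ k → ∀ K : Set E, K ⊆ U → IsCompact K → ∀ L : Set E, IsCompact L →
      ∀ ε > (0 : ℝ), ∃ J : ℕ, ∀ j ≥ J, ∀ x ∈ K, ∀ v : Fin i → E, (∀ l, v l ∈ L) →
        ‖iteratedFDerivWithin ℝ i (fun z => T j (γ z)) U x v
            - iteratedFDerivWithin ℝ i γ U x v‖ < ε := by
  intro i hi K hKU hK L hL ε hε
  have hik : (i : WithTop ℕ∞) ≤ ((k : ℕ∞) : WithTop ℕ∞) := by exact_mod_cast hi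
  obtain ⟨J, hJ⟩ :=
    hT _ (hγ.isCompact_image_iteratedFDerivWithin_apply hU.uniqueDiffOn hik hKU hK hL) ε hε
  refine ⟨J, fun j hj x hx v hv => ?_⟩
  rw [(T j).iteratedFDerivWithin_comp_left_apply (hγ x (hKU hx)) hU.uniqueDiffOn (hKU hx) hik]
  exact hJ j hj _ ⟨(x, v), ⟨hx, fun l _ => hv l⟩, rfl⟩
end
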